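/- The 3/2 bound for triangles is tight: with U_1 = {0}, U_2 = {0,1}, U_3 = {1} on the real line with d(x,y)=|x−y| and G the 3-cycle on vertices 1,2,3, one has c^max(G) = 3 and c(G) = 2. -/
import Mathlib


open scoped NNReal

/-- Maximum distance between two finite sets of points of a metric space. -/
noncomputable def pairMax {M : Type*} [MetricSpace M] (s t : Finset M) : ℝ≥0 :=
  (s ×ˢ t).sup fun p => nndist p.1 p.2

lemma pairMax_comm {M : Type*} [MetricSpace M] (s t : Finset M) :
    pairMax s t = pairMax t s := by
  unfold pairMax
  apply le_antisymm <;>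
  · apply Finset.sup_le
    rintro ⟨a, b⟩ hab
    rw [Finset.mem_product] at hab
    calc nndist a b = nndist b a := nndist_comm a b
      _ ≤ _ := Finset.le_sup (f := fun p => nndist p.1 p.2) (b := (b, a))
            (Finset.mem_product.mpr ⟨hab.2, hab.1⟩)

/-- `c^max`: sum over the edges of the pairwise maximum distances. -/
noncomputable def cmax {V M : Type*} [MetricSpace M] (U : V → Finset M)
    (E : Finset (Sym2 V)) : ℝ≥0 :=
  ∑ e ∈ E, Sym2.lift ⟨fun i j => pairMax (U i) (U j),
    fun i j => pairMax_comm (U i) (U j)⟩ e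

/-- `c`: worst-case cost over all simultaneous placements `u i ∈ U i`. -/
noncomputable def cost {V M : Type*} [Fintype V] [DecidableEq V] [MetricSpace M]
    (U : V → Finset M) (E : Finset (Sym2 V)) : ℝ≥0 :=
  (Finset.univ.pi fun i => U i).sup fun u =>
    ∑ e ∈ E, Sym2.lift
      ⟨fun i j => nndist (u i (Finset.mem_univ i)) (u j (Finset.mem_univ j)),
       fun i j => nndist_comm _ _⟩ e


private lemma nd01' : nndist (0:ℝ) 1 = 1 := by
  rw [← NNReal.coe_inj]; simp [coe_nndist, Real.dist_eq]

private lemma sum3' (f : Sym2 (Fin 3) → ℝ≥0) :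
    ∑ e ∈ ({s(0,1), s(1,2), s(0,2)} : Finset (Sym2 (Fin 3))), f e
      = f s(0,1) + f s(1,2) + f s(0,2) := by
  rw [Finset.sum_insert (by decide), Finset.sum_insert (by decide),
    Finset.sum_singleton, add_assoc]

/-- Tightness of the `3/2` bound for triangles: with `U 1 = {0}`,
`U 2 = {0,1}`, `U 3 = {1}` on the real line, `c^max(G) = 3` and `c(G) = 2`. -/
theorem stmt14 :
    cmax (fun i : Fin 3 => if (i : ℕ) = 0 then ({0} : Finset ℝ)
        else if (i : ℕ) = 1 then {0, 1} else {1}) ({s(0, 1), s(1, 2), s(0, 2)} : Finset (Sym2 (Fin 3))) = 3 ∧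
    cost (fun i : Fin 3 => if (i : ℕ) = 0 then ({0} : Finset ℝ)
        else if (i : ℕ) = 1 then {0, 1} else {1}) ({s(0, 1), s(1, 2), s(0, 2)} : Finset (Sym2 (Fin 3))) = 2 := by
  constructor
  · unfold cmax
    rw [sum3']
    simp only [Sym2.lift_mk]
    norm_num
    have p1 : pairMax ({0}:Finset ℝ) {0,1} = 1 := by
      simp [pairMax, Finset.singleton_product, nd01']
    have p2 : pairMax ({0,1}:Finset ℝ) {1} = 1 := by
      simp [pairMax, Finset.product_singleton, nd01']
    have p3 : pairMax ({0}:Finset ℝ) {1} = 1 := by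
      simp [pairMax, nd01']
    rw [p1, p2, p3]
    norm_num
  · unfold cost
    apply le_antisymm
    · apply Finset.sup_le
      intro u hu
      rw [Finset.mem_pi] at hu
      have h0 : u 0 (Finset.mem_univ 0) = 0 := by
        have := hu 0 (Finset.mem_univ 0); simpa using this
      have h2 : u 2 (Finset.mem_univ 2) = 1 := by
        have := hu 2 (Finset.mem_univ 2); simpa using this
      have h1 : u 1 (Finset.mem_univ 1) = 0 ∨ u 1 (Finset.mem_univ 1) = 1 := by
        have := hu 1 (Finset.mem_univ 1); simpa using this
      rw [sum3']
      simp only [Sym2.lift_mk]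
      rcases h1 with h1 | h1 <;>
        simp [h0, h1, h2, nd01', nndist_comm (1:ℝ) 0, one_add_one_eq_two]
    · have hm : (fun (i : Fin 3) (_ : i ∈ Finset.univ) => if (i : ℕ) = 0 then (0:ℝ) else 1) ∈
          Finset.univ.pi (fun i : Fin 3 => if (i : ℕ) = 0 then ({0} : Finset ℝ)
            else if (i : ℕ) = 1 then {0, 1} else {1}) := by
        rw [Finset.mem_pi]
        intro i _
        fin_cases i <;> simp
      refine le_trans ?_ (Finset.le_sup hm)
      rw [sum3']
      simp [Sym2.lift_mk, nd01', nndist_comm (1:ℝ) 0, one_add_one_eq_two]
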